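/- For every integer v ≥ 1 and every real x > 0, the v×v matrix M(x) with entries M_{jk}(x) = (F_v(x)/F_{v+4}(x)) · ( [(v+2)δ_{jk} − 1]·F_{v+4}(x)/F_v(x) − [vδ_{jk} − 1]·F_{v+2}(x)²/F_v(x)² ) / ( (v+2)·F_{v+4}(x)/F_v(x) − v·F_{v+2}(x)²/F_v(x)² ) is the inverse of J(x), i.e. J(x)·M(x) equals the v×v identity matrix. -/

import Mathlib

open Real

/-- Chi-squared cumulative distribution function with `ν` degrees of freedom. -/
noncomputable def chiCDF (ν x : ℝ) : ℝ :=
  ((2 : ℝ) ^ (ν / 2) * Real.Gamma (ν / 2))⁻¹ *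
    ∫ t in (0 : ℝ)..x, t ^ (ν / 2 - 1) * Real.exp (-t / 2)

/-- The `v×v` matrix `J(x)` with entries
`J_{kj}(x) = (1/2)·[(1 + 2δ_{kj})·F_{v+4}(x)/F_v(x) − F_{v+2}(x)²/F_v(x)²]`. -/
noncomputable def Jmat (v : ℕ) (x : ℝ) : Matrix (Fin v) (Fin v) ℝ :=
  Matrix.of fun k j =>
    (1 / 2) * ((1 + 2 * (if k = j then (1 : ℝ) else 0)) * chiCDF (v + 4) x / chiCDF v x
      - (chiCDF (v + 2) x) ^ 2 / (chiCDF v x) ^ 2)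

/-!
`J(x) = a • 1 + b • E` with `E` the all-ones matrix, `a = F_{v+4}/F_v` and
`b = (F_{v+4}/F_v - F_{v+2}²/F_v²)/2`. Such matrices multiply like `a + b·ε` with `ε² = v·ε`, so
`a • 1 + b • E` has inverse `a⁻¹ • 1 - b / (a (a + v b)) • E`, which is the given `M(x)`.
Invertibility needs `a + v b > 0`, i.e. `v F_{v+2}² < (v + 2) F_{v+4} F_v`. Since
`2^{(ν+2)/2} Γ((ν+2)/2) = ν 2^{ν/2} Γ(ν/2)`, this is the strict Cauchy–Schwarz inequality
`m₁² < m₀ m₂` for the moments `m_k = ∫₀ˣ t^k w(t) dt` of the weight `w(t) = t^{v/2-1} e^{-t/2}`,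
which follows from `∫₀ˣ (m₀ t - m₁)² w(t) dt = m₀ (m₀ m₂ - m₁²) > 0`.
-/

open MeasureTheory Set intervalIntegral

theorem sq_integral_mul_lt_integral_mul_integral {w : ℝ → ℝ} {a b : ℝ} (hab : a < b)
    (hw : ∀ t ∈ Ioc a b, 0 < w t) (hwi : IntervalIntegrable w volume a b) :
    (∫ t in a..b, t * w t) ^ 2 < (∫ t in a..b, w t) * ∫ t in a..b, t ^ 2 * w t := by
  have hw1 : IntervalIntegrable (fun t => t * w t) volume a b :=
    hwi.continuousOn_mul continuousOn_id
  have hw2 : IntervalIntegrable (fun t => t ^ 2 * w t) volume a b :=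
    hwi.continuousOn_mul (continuousOn_id.pow 2)
  set m₀ := ∫ t in a..b, w t
  set m₁ := ∫ t in a..b, t * w t
  set m₂ := ∫ t in a..b, t ^ 2 * w t
  have hm₀ : 0 < m₀ :=
    intervalIntegral_pos_of_pos_on hwi (fun t ht => hw t (Ioo_subset_Ioc_self ht)) hab
  have hsq : ∫ t in a..b, (m₀ * t - m₁) ^ 2 * w t = m₀ * (m₀ * m₂ - m₁ ^ 2) := by
    have hexpand : ∀ t, (m₀ * t - m₁) ^ 2 * w t =
        m₀ ^ 2 * (t ^ 2 * w t) - 2 * m₀ * m₁ * (t * w t) + m₁ ^ 2 * w t := fun t => by ring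
    simp only [hexpand]
    rw [integral_add ((hw2.const_mul _).sub (hw1.const_mul _)) (hwi.const_mul _),
      integral_sub (hw2.const_mul _) (hw1.const_mul _), intervalIntegral.integral_const_mul,
      intervalIntegral.integral_const_mul, intervalIntegral.integral_const_mul]
    ring
  have hpos : 0 < ∫ t in a..b, (m₀ * t - m₁) ^ 2 * w t := by
    rw [integral_pos_iff_support_of_nonneg_ae']
    · refine ⟨hab, ?_⟩
      have hsupp : Ioc a b \ {m₁ / m₀} ⊆
          Function.support (fun t => (m₀ * t - m₁) ^ 2 * w t) ∩ Ioc a b := by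
        rintro t ⟨ht, hne⟩
        refine ⟨mul_ne_zero (pow_ne_zero _ ?_) (hw t ht).ne', ht⟩
        rw [sub_ne_zero]
        exact fun h => hne (eq_div_of_mul_eq hm₀.ne' (by linarith))
      calc (0 : ENNReal) < volume (Ioc a b \ {m₁ / m₀}) := by
            rw [measure_sdiff_null (measure_singleton _), Real.volume_Ioc]; simpa using hab
        _ ≤ _ := measure_mono hsupp
    · rw [uIoc_of_le hab.le]
      filter_upwards [ae_restrict_mem measurableSet_Ioc] with t ht
      exact mul_nonneg (sq_nonneg _) (hw t ht).le
    · exact hwi.continuousOn_mul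
        ((continuousOn_const.mul continuousOn_id).sub continuousOn_const |>.pow 2)
  rw [hsq] at hpos
  nlinarith [pos_of_mul_pos_right hpos hm₀.le]

lemma intervalIntegrable_rpow_mul_exp {r : ℝ} (hr : -1 < r) (x : ℝ) :
    IntervalIntegrable (fun t => t ^ r * exp (-t / 2)) volume 0 x :=
  (intervalIntegrable_rpow' hr).mul_continuousOn (by fun_prop)

lemma integral_rpow_mul_exp_pos {r x : ℝ} (hr : -1 < r) (hx : 0 < x) :
    0 < ∫ t in (0 : ℝ)..x, t ^ r * exp (-t / 2) :=
  intervalIntegral_pos_of_pos_on (intervalIntegrable_rpow_mul_exp hr x)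
    (fun _ ht => mul_pos (rpow_pos_of_pos ht.1 r) (exp_pos _)) hx

theorem sq_integral_rpow_add_one_mul_exp_lt {r x : ℝ} (hr : -1 < r) (hx : 0 < x) :
    (∫ t in (0 : ℝ)..x, t ^ (r + 1) * exp (-t / 2)) ^ 2 <
      (∫ t in (0 : ℝ)..x, t ^ r * exp (-t / 2)) *
        ∫ t in (0 : ℝ)..x, t ^ (r + 2) * exp (-t / 2) := by
  have h1 : ∀ t ∈ uIcc 0 x, t ^ (r + 1) * exp (-t / 2) = t * (t ^ r * exp (-t / 2)) := by
    intro t ht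
    rw [uIcc_of_le hx.le] at ht
    rw [rpow_add_one' ht.1 (by linarith)]
    ring
  have h2 : ∀ t ∈ uIcc 0 x, t ^ (r + 2) * exp (-t / 2) = t ^ 2 * (t ^ r * exp (-t / 2)) := by
    intro t ht
    rw [uIcc_of_le hx.le] at ht
    rw [show r + 2 = r + 1 + 1 by ring, rpow_add_one' ht.1 (by linarith),
      rpow_add_one' ht.1 (by linarith)]
    ring
  rw [integral_congr h1, integral_congr h2]
  exact sq_integral_mul_lt_integral_mul_integral hx
    (fun _ ht => mul_pos (rpow_pos_of_pos ht.1 r) (exp_pos _))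
    (intervalIntegrable_rpow_mul_exp hr x)

noncomputable def chiNormConst (ν : ℝ) : ℝ := 2 ^ (ν / 2) * Gamma (ν / 2)

lemma chiNormConst_pos {ν : ℝ} (hν : 0 < ν) : 0 < chiNormConst ν :=
  mul_pos (rpow_pos_of_pos two_pos _) (Gamma_pos_of_pos (half_pos hν))

lemma chiNormConst_add_two {ν : ℝ} (hν : 0 < ν) :
    chiNormConst (ν + 2) = ν * chiNormConst ν := by
  rw [chiNormConst, chiNormConst, add_div, div_self two_ne_zero, rpow_add_one two_ne_zero,
    Gamma_add_one (half_pos hν).ne']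
  ring

lemma chiCDF_eq_inv_chiNormConst_mul (ν x : ℝ) :
    chiCDF ν x = (chiNormConst ν)⁻¹ * ∫ t in (0 : ℝ)..x, t ^ (ν / 2 - 1) * exp (-t / 2) := rfl

lemma chiCDF_pos {ν x : ℝ} (hν : 0 < ν) (hx : 0 < x) : 0 < chiCDF ν x :=
  mul_pos (inv_pos.2 (chiNormConst_pos hν)) (integral_rpow_mul_exp_pos (by linarith) hx)

theorem mul_sq_chiCDF_add_two_lt {ν x : ℝ} (hν : 0 < ν) (hx : 0 < x) :
    ν * chiCDF (ν + 2) x ^ 2 < (ν + 2) * chiCDF (ν + 4) x * chiCDF ν x := by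
  have hN := chiNormConst_pos hν
  have hN2 := chiNormConst_add_two hν
  have hN4 : chiNormConst (ν + 4) = (ν + 2) * (ν * chiNormConst ν) := by
    rw [show ν + 4 = ν + 2 + 2 by ring, chiNormConst_add_two (by linarith), hN2]
  have e2 : (ν + 2) / 2 - 1 = (ν / 2 - 1) + 1 := by ring
  have e4 : (ν + 4) / 2 - 1 = (ν / 2 - 1) + 2 := by ring
  have hcs := sq_integral_rpow_add_one_mul_exp_lt (r := ν / 2 - 1) (by linarith) hx
  rw [chiCDF_eq_inv_chiNormConst_mul, chiCDF_eq_inv_chiNormConst_mul,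
    chiCDF_eq_inv_chiNormConst_mul, hN2, hN4, e2, e4]
  -- treat the moments as atoms, so that `field_simp` does not rewrite inside the integrals
  generalize chiNormConst ν = N at hN ⊢
  generalize (∫ t in (0 : ℝ)..x, t ^ (ν / 2 - 1) * exp (-t / 2)) = m₀ at hcs ⊢
  generalize (∫ t in (0 : ℝ)..x, t ^ (ν / 2 - 1 + 1) * exp (-t / 2)) = m₁ at hcs ⊢
  generalize (∫ t in (0 : ℝ)..x, t ^ (ν / 2 - 1 + 2) * exp (-t / 2)) = m₂ at hcs ⊢
  field_simp
  linarith

section AllOnes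

variable (n R : Type*) [Fintype n]

def allOnes [One R] : Matrix n n R := Matrix.of fun _ _ => 1

variable {n R}

lemma allOnes_mul_allOnes [Semiring R] :
    allOnes n R * allOnes n R = (Fintype.card n : R) • allOnes n R := by
  ext i j
  simp [allOnes, Matrix.mul_apply]

lemma smul_one_add_smul_allOnes_mul [DecidableEq n] [CommRing R] (a b c d : R) :
    (a • 1 + b • allOnes n R) * (c • 1 + d • allOnes n R) =
      (a * c) • 1 + (a * d + b * c + Fintype.card n * (b * d)) • allOnes n R := by
  simp only [Matrix.add_mul, Matrix.mul_add, Matrix.smul_mul, Matrix.mul_smul,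
    allOnes_mul_allOnes, Matrix.one_mul, Matrix.mul_one, smul_smul]
  module

lemma smul_one_add_smul_allOnes_mul_eq_one [DecidableEq n] [Field R] {a b : R} (ha : a ≠ 0)
    (hab : a + Fintype.card n * b ≠ 0) :
    (a • 1 + b • allOnes n R) *
      (a⁻¹ • 1 + (-b / (a * (a + Fintype.card n * b))) • allOnes n R) = 1 := by
  have hcoeff : a * (-b / (a * (a + Fintype.card n * b))) + b * a⁻¹ +
      Fintype.card n * (b * (-b / (a * (a + Fintype.card n * b)))) = 0 := by
    generalize hc : a + Fintype.card n * b = c at hab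
    field_simp
    linear_combination -b * hc
  rw [smul_one_add_smul_allOnes_mul, mul_inv_cancel₀ ha, hcoeff, one_smul, zero_smul, add_zero]

end AllOnes

lemma Jmat_eq_smul_one_add_smul_allOnes (v : ℕ) (x : ℝ) :
    Jmat v x = (chiCDF (v + 4) x / chiCDF v x) • 1 +
      ((chiCDF (v + 4) x / chiCDF v x - chiCDF (v + 2) x ^ 2 / chiCDF v x ^ 2) / 2) •
        allOnes (Fin v) ℝ := by
  ext k j
  simp only [Jmat, allOnes, Matrix.add_apply, Matrix.smul_apply, Matrix.one_apply,
    Matrix.of_apply, smul_eq_mul]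
  split_ifs <;> ring

/-- The explicit matrix `M(x)` is a right inverse of `J(x)`. -/
theorem Jmat_mul_inverse (v : ℕ) (hv : 1 ≤ v) (x : ℝ) (hx : 0 < x) :
    Jmat v x * (Matrix.of fun j k =>
      (chiCDF v x / chiCDF (v + 4) x) *
        ((((v : ℝ) + 2) * (if j = k then (1 : ℝ) else 0) - 1) * chiCDF (v + 4) x / chiCDF v x
          - ((v : ℝ) * (if j = k then (1 : ℝ) else 0) - 1)
              * (chiCDF (v + 2) x) ^ 2 / (chiCDF v x) ^ 2) /
        (((v : ℝ) + 2) * chiCDF (v + 4) x / chiCDF v x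
          - (v : ℝ) * (chiCDF (v + 2) x) ^ 2 / (chiCDF v x) ^ 2)) = 1 := by
  have hv₀ : (0 : ℝ) < v := by exact_mod_cast hv
  have hF₀ : 0 < chiCDF v x := chiCDF_pos hv₀ hx
  have hF₄ : 0 < chiCDF (v + 4) x := chiCDF_pos (by positivity) hx
  have hD := sub_pos.2 (mul_sq_chiCDF_add_two_lt hv₀ hx)
  set F₀ := chiCDF v x
  set F₂ := chiCDF (v + 2) x
  set F₄ := chiCDF (v + 4) x
  set a := F₄ / F₀
  set b := (F₄ / F₀ - F₂ ^ 2 / F₀ ^ 2) / 2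
  have ha : a ≠ 0 := by positivity
  generalize hDdef : (v + 2) * F₄ * F₀ - v * F₂ ^ 2 = D at hD
  have hden : (v + 2) * F₄ / F₀ - v * F₂ ^ 2 / F₀ ^ 2 = D / F₀ ^ 2 := by
    subst hDdef; field_simp
  have hab : a + v * b = D / (2 * F₀ ^ 2) := by
    subst hDdef; simp only [a, b]; field_simp; ring
  have hM : (Matrix.of fun j k : Fin v =>
      (F₀ / F₄) * ((((v : ℝ) + 2) * (if j = k then (1 : ℝ) else 0) - 1) * F₄ / F₀
          - ((v : ℝ) * (if j = k then (1 : ℝ) else 0) - 1) * F₂ ^ 2 / F₀ ^ 2) /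
        (((v : ℝ) + 2) * F₄ / F₀ - (v : ℝ) * F₂ ^ 2 / F₀ ^ 2))
      = a⁻¹ • 1 + (-b / (a * (a + v * b))) • allOnes (Fin v) ℝ := by
    ext j k
    simp only [allOnes, Matrix.add_apply, Matrix.smul_apply, Matrix.one_apply, Matrix.of_apply,
      smul_eq_mul, hden, hab]
    split_ifs <;> (simp only [a, b]; field_simp [hD.ne']; subst hDdef; ring)
  rw [Jmat_eq_smul_one_add_smul_allOnes, hM]
  simpa only [Fintype.card_fin] using smul_one_add_smul_allOnes_mul_eq_one (n := Fin v) ha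
    (by rw [Fintype.card_fin, hab]; positivity)
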